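/- Let p be a prime and G a metabelian p-group of order p^n of maximal class with n > 5. Suppose G does not possess an abelian subgroup of index p. (a) If G possesses a subgroup T with |G : T| = p and |T : Z(T)| = p^2, then CD(G) is exactly the set of subgroups H with Z(T) ≤ H ≤ T; this set consists of Z(T), T, and exactly p+1 abelian subgroups of order p^{n-2}, one of which is the derived subgroup G', and none of the p+1 abelian members other than G' is normal in G. (b) If G does not possess such a subgroup T, then CD(G) = {G'}. -/

import Mathlib

/-- The Chermak-Delgado measure of a subgroup `H` of `G`: `|H| · |C_G(H)|`. -/
noncomputable def cdMeasure (G : Type*) [Group G] (H : Subgroup G) : ℕ :=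
  Nat.card H * Nat.card (Subgroup.centralizer (H : Set G))

/-- The Chermak-Delgado lattice of `G`: the set of subgroups whose
Chermak-Delgado measure is maximal. -/
def CD (G : Type*) [Group G] : Set (Subgroup G) :=
  {H : Subgroup G | ∀ K : Subgroup G, cdMeasure G K ≤ cdMeasure G H}

/-- The center of a subgroup `T` of `G`, regarded as a subgroup of `G`. -/
def centerIn {G : Type*} [Group G] (T : Subgroup G) : Subgroup G :=
  (Subgroup.center T).map T.subtype

/-!
Maximal class gives `|G : G'| = p²` and `|Z(G)| = p`, so `|G'| = p^(n-2)`; as `G'` is abelian and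
no subgroup of index `p` is abelian, `C_G(G') = G'` and `m_G(G') = p^(2n-4)`.

`CD(G)` is closed under intersections and centralizers, so its least member `A` is abelian and
every member lies between `A` and `C_G(A)`. For an abelian `A`: if `C_G(A) = G` then `A ≤ Z(G)`;
if `|C_G(A)| = p^(n-1)` then `C_G(A)` is nonabelian with `A` central, forcing `|A| ≤ p^(n-3)`;
otherwise `|A| ≤ |C_G(A)| ≤ p^(n-2)`. Hence `m*(G) = p^(2n-4)`, and either `A = C_G(A) = G'`, or
`T = C_G(A)` has index `p`, `Z(T) = A` has index `p²` in `T` and `CD(G) = [Z(T), T]`.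

The subgroups strictly between `Z(T)` and `T` are the self-centralizing ones of order `p^(n-2)`.
Their differences with `Z(T)` partition `T \ Z(T)`, so there are `(p² - 1)/(p - 1) = p + 1`
of them, and a normal one has an abelian quotient of order `p²`, hence contains `G'` and equals it.
-/

open scoped commutatorElement

namespace Subgroup

variable {G : Type*} [Group G]

theorem card_mul_relIndex {H K : Subgroup G} (h : H ≤ K) :
    Nat.card H * H.relIndex K = Nat.card K := by
  rw [← relIndex_bot_left, ← relIndex_bot_left, relIndex_mul_relIndex ⊥ H K bot_le h]

theorem card_mul_card_le_card_sup_mul_card_inf [Finite G] (H K : Subgroup G) :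
    Nat.card H * Nat.card K ≤ Nat.card ↥(H ⊔ K) * Nat.card ↥(H ⊓ K) := by
  have hK : Nat.card ↥(H ⊓ K) * H.relIndex K = Nat.card K := by
    rw [← inf_relIndex_right, card_mul_relIndex inf_le_right]
  have hle : H.relIndex K ≤ H.relIndex (H ⊔ K) :=
    relIndex_le_of_le_right le_sup_right (H.subgroupOf _).index_ne_zero_of_finite
  calc Nat.card H * Nat.card K = Nat.card ↥(H ⊓ K) * (Nat.card H * H.relIndex K) := by
        rw [← hK]; ring
    _ ≤ Nat.card ↥(H ⊓ K) * (Nat.card H * H.relIndex (H ⊔ K)) := by gcongr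
    _ = Nat.card ↥(H ⊔ K) * Nat.card ↥(H ⊓ K) := by
        rw [card_mul_relIndex le_sup_left, mul_comm]

theorem centralizer_sup (H K : Subgroup G) :
    centralizer ((H ⊔ K : Subgroup G) : Set G) = centralizer H ⊓ centralizer K :=
  le_antisymm
    (le_inf (centralizer_le (SetLike.coe_subset_coe.mpr le_sup_left))
      (centralizer_le (SetLike.coe_subset_coe.mpr le_sup_right)))
    (le_centralizer_iff.mp
      (sup_le (le_centralizer_iff.mp inf_le_left) (le_centralizer_iff.mp inf_le_right)))

theorem isMulCommutative_sup {H K : Subgroup G} [IsMulCommutative H] [IsMulCommutative K]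
    (hHK : H ≤ centralizer K) : IsMulCommutative ↥(H ⊔ K) := by
  rw [← le_centralizer_iff_isMulCommutative, centralizer_sup]
  exact sup_le (le_inf (le_centralizer H) hHK)
    (le_inf (le_centralizer_iff.mp hHK) (le_centralizer K))

theorem centerIn_eq (T : Subgroup G) : centerIn T = centralizer T ⊓ T := by
  ext x
  constructor
  · rintro ⟨y, hy, rfl⟩
    exact ⟨mem_centralizer_iff.mpr fun h hh =>
      congrArg Subtype.val (mem_center_iff.mp hy ⟨h, hh⟩), y.2⟩
  · rintro ⟨hc, hxT⟩
    exact ⟨⟨x, hxT⟩,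
      mem_center_iff.mpr fun g => Subtype.ext (mem_centralizer_iff.mp hc g g.2), rfl⟩

theorem card_centerIn (T : Subgroup G) : Nat.card (centerIn T) = Nat.card (center T) :=
  card_map_of_injective T.subtype_injective

theorem lowerCentralSeries_succ_lt [Group.IsNilpotent G] {j : ℕ}
    (h : (⊤ : Subgroup G).lowerCentralSeries j ≠ ⊥) :
    (⊤ : Subgroup G).lowerCentralSeries (j + 1) < (⊤ : Subgroup G).lowerCentralSeries j := by
  refine (lowerCentralSeries_antitone _ j.le_succ).lt_of_ne fun heq => h ?_
  have hconst : ∀ m, (⊤ : Subgroup G).lowerCentralSeries (j + m) =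
      (⊤ : Subgroup G).lowerCentralSeries j := by
    intro m
    induction m with
    | zero => rfl
    | succ m ih => rw [← add_assoc, lowerCentralSeries_succ, ih, ← lowerCentralSeries_succ, heq]
  obtain ⟨N, hN⟩ := nilpotent_iff_lowerCentralSeries.mp ‹_›
  rw [← hconst N, eq_bot_iff, ← hN]
  exact lowerCentralSeries_antitone _ (Nat.le_add_left N j)

theorem commutator_le_lowerCentralSeries_two [IsCyclic (G ⧸ _root_.commutator G)] :
    _root_.commutator G ≤ (⊤ : Subgroup G).lowerCentralSeries 2 := by
  let f : G ⧸ (⊤ : Subgroup G).lowerCentralSeries 2 →* G ⧸ _root_.commutator G :=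
    QuotientGroup.map _ _ (MonoidHom.id G) (lowerCentralSeries_antitone _ one_le_two)
  have hker : f.ker ≤ center _ := by
    rintro q hq
    obtain ⟨x, rfl⟩ := QuotientGroup.mk_surjective q
    have hx : x ∈ _root_.commutator G := (QuotientGroup.eq_one_iff x).mp hq
    refine mem_center_iff.mpr fun y => ?_
    obtain ⟨z, rfl⟩ := QuotientGroup.mk_surjective y
    rw [← QuotientGroup.mk_mul, ← QuotientGroup.mk_mul, QuotientGroup.eq,
      show (z * x)⁻¹ * (x * z) = ⁅x⁻¹, z⁻¹⁆ by group]
    exact commutator_mem_commutator (inv_mem hx) (mem_top _)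
  have := f.isMulCommutative_of_isCyclic_of_ker_le_center hker
  exact Normal.quotient_commutative_iff_commutator_le.mp this

/-- `log_p |H|`; it is the exponent of `|H|` only when `|H|` is a power of `p`. -/
noncomputable def logCard (p : ℕ) (H : Subgroup G) : ℕ := Nat.log p (Nat.card H)

theorem logCard_mono [Finite G] {p : ℕ} : Monotone (logCard p : Subgroup G → ℕ) :=
  fun _ _ h => Nat.log_mono_right (card_le_of_le h)

theorem logCard_centerIn {p : ℕ} (T : Subgroup G) :
    (centerIn T).logCard p = (center T).logCard p := by
  rw [logCard, logCard, card_centerIn]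

theorem logCard_bot {p : ℕ} : (⊥ : Subgroup G).logCard p = 0 := by
  rw [logCard, card_bot, Nat.log_one_right]

theorem lt_of_le_of_logCard_lt {p : ℕ} {H K : Subgroup G} (h : H ≤ K)
    (hlt : H.logCard p < K.logCard p) : H < K :=
  h.lt_of_ne (ne_of_apply_ne (logCard p) hlt.ne)

variable {p n : ℕ} [hp : Fact p.Prime]

theorem card_eq_pow_logCard (hG : Nat.card G = p ^ n) (H : Subgroup G) :
    Nat.card H = p ^ H.logCard p := by
  obtain ⟨k, -, hk⟩ := (Nat.dvd_prime_pow hp.out).mp (hG ▸ card_subgroup_dvd_card H)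
  rw [logCard, hk, Nat.log_pow hp.out.one_lt]

theorem logCard_top (hG : Nat.card G = p ^ n) : (⊤ : Subgroup G).logCard p = n := by
  rw [logCard, card_top, hG, Nat.log_pow hp.out.one_lt]

theorem index_eq_pow_iff (hG : Nat.card G = p ^ n) {H : Subgroup G} {k : ℕ} :
    H.index = p ^ k ↔ H.logCard p + k = n := by
  have h := H.card_mul_index
  rw [card_eq_pow_logCard hG, hG] at h
  constructor
  · intro hk
    rw [hk, ← pow_add] at h
    exact Nat.pow_right_injective hp.out.two_le h
  · rintro rfl
    rw [pow_add] at h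
    exact Nat.eq_of_mul_eq_mul_left (pow_pos hp.out.pos _) h

theorem index_center_eq_pow_iff (hG : Nat.card G = p ^ n) {T : Subgroup G} {k : ℕ} :
    (center T).index = p ^ k ↔ (centerIn T).logCard p + k = T.logCard p := by
  rw [logCard_centerIn]
  exact index_eq_pow_iff (card_eq_pow_logCard hG T)

variable [Finite G]

theorem eq_of_le_of_logCard_le (hG : Nat.card G = p ^ n) {H K : Subgroup G} (h : H ≤ K)
    (h' : K.logCard p ≤ H.logCard p) : H = K :=
  eq_of_le_of_card_ge h <| by
    rw [card_eq_pow_logCard hG, card_eq_pow_logCard hG]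
    exact Nat.pow_le_pow_right hp.out.pos h'

theorem logCard_lt_logCard (hG : Nat.card G = p ^ n) {H K : Subgroup G} (h : H < K) :
    H.logCard p < K.logCard p :=
  lt_of_not_ge fun h' => h.ne (eq_of_le_of_logCard_le hG h.le h')

theorem logCard_le (hG : Nat.card G = p ^ n) (H : Subgroup G) : H.logCard p ≤ n :=
  logCard_top hG ▸ logCard_mono le_top

theorem card_quotient_eq_pow (hG : Nat.card G = p ^ n) (H : Subgroup G) [H.Normal] :
    Nat.card (G ⧸ H) = p ^ (n - H.logCard p) :=
  (index_eq_pow_iff hG).mpr (Nat.add_sub_of_le (logCard_le hG H))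

theorem isMulCommutative_of_le_centralizer (hG : Nat.card G = p ^ n) {S C : Subgroup G}
    (hSC : S ≤ C) (hC : C ≤ centralizer S) (hlog : C.logCard p ≤ S.logCard p + 1) :
    IsMulCommutative C := by
  have : IsMulCommutative S := le_centralizer_iff_isMulCommutative.mp (hSC.trans hC)
  rcases hSC.eq_or_lt with rfl | hlt
  · exact this
  obtain ⟨x, hxC, hxS⟩ := SetLike.exists_of_lt hlt
  have hle : S ⊔ zpowers x ≤ C := sup_le hSC (zpowers_le.mpr hxC)
  have hlt' : S < S ⊔ zpowers x :=
    lt_of_le_of_ne le_sup_left fun he => hxS (he ▸ mem_sup_right (mem_zpowers x))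
  have := logCard_lt_logCard hG hlt'
  rw [← eq_of_le_of_logCard_le hG hle (by omega)]
  exact isMulCommutative_sup (le_centralizer_iff.mp ((zpowers_le.mpr hxC).trans hC))

theorem logCard_centerIn_add_two_le (hG : Nat.card G = p ^ n) {M : Subgroup G}
    (hM : ¬IsMulCommutative M) : (centerIn M).logCard p + 2 ≤ M.logCard p := by
  have hZM : centerIn M ≤ M := (centerIn_eq M).trans_le inf_le_right
  have hMZ : M ≤ centralizer (centerIn M : Set G) :=
    le_centralizer_iff.mp ((centerIn_eq M).trans_le inf_le_left)
  by_contra hcon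
  exact hM (isMulCommutative_of_le_centralizer hG hZM hMZ (by omega))

theorem add_one_le_logCard_lowerCentralSeries (hG : Nat.card G = p ^ n) {j k : ℕ}
    (hk : (⊤ : Subgroup G).lowerCentralSeries k ≠ ⊥) (hjk : j ≤ k) :
    k + 1 ≤ ((⊤ : Subgroup G).lowerCentralSeries j).logCard p + j := by
  have := (IsPGroup.of_card hG).isNilpotent
  induction hjk using Nat.decreasingInduction with
  | self =>
    have := logCard_lt_logCard hG (bot_lt_iff_ne_bot.mpr hk)
    rw [logCard_bot] at this
    omega
  | of_succ j hjk ih =>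
    have := logCard_lt_logCard hG
      (lowerCentralSeries_succ_lt (ne_bot_of_le_ne_bot hk (lowerCentralSeries_antitone _ hjk.le)))
    omega

end Subgroup

section ChermakDelgado

open Subgroup

variable {G : Type*} [Group G] [Finite G]

theorem cdMeasure_pos (H : Subgroup G) : 0 < cdMeasure G H :=
  Nat.mul_pos Nat.card_pos Nat.card_pos

theorem cdMeasure_mul_cdMeasure_le (H K : Subgroup G) :
    cdMeasure G H * cdMeasure G K ≤ cdMeasure G (H ⊔ K) * cdMeasure G (H ⊓ K) := by
  have hC := card_mul_card_le_card_sup_mul_card_inf (centralizer (H : Set G)) (centralizer K)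
  rw [← centralizer_sup] at hC
  have hCinf : centralizer (H : Set G) ⊔ centralizer K ≤
      centralizer ((H ⊓ K : Subgroup G) : Set G) :=
    sup_le (centralizer_le (SetLike.coe_subset_coe.mpr inf_le_left))
      (centralizer_le (SetLike.coe_subset_coe.mpr inf_le_right))
  unfold cdMeasure
  calc _ = (Nat.card H * Nat.card K) *
        (Nat.card (centralizer (H : Set G)) * Nat.card (centralizer (K : Set G))) := by ring
    _ ≤ (Nat.card ↥(H ⊔ K) * Nat.card ↥(H ⊓ K)) *
        (Nat.card ↥(centralizer (H : Set G) ⊔ centralizer K) *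
          Nat.card (centralizer ((H ⊔ K : Subgroup G) : Set G))) :=
        Nat.mul_le_mul (card_mul_card_le_card_sup_mul_card_inf H K) hC
    _ ≤ (Nat.card ↥(H ⊔ K) * Nat.card ↥(H ⊓ K)) *
        (Nat.card (centralizer ((H ⊓ K : Subgroup G) : Set G)) *
          Nat.card (centralizer ((H ⊔ K : Subgroup G) : Set G))) := by
        gcongr; exact card_le_of_le hCinf
    _ = _ := by ring

theorem inf_mem_CD {H K : Subgroup G} (hH : H ∈ CD G) (hK : K ∈ CD G) : H ⊓ K ∈ CD G := by
  have h : cdMeasure G H * cdMeasure G H ≤ cdMeasure G H * cdMeasure G (H ⊓ K) :=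
    calc cdMeasure G H * cdMeasure G H ≤ cdMeasure G H * cdMeasure G K :=
          Nat.mul_le_mul_left _ (hK H)
      _ ≤ cdMeasure G (H ⊔ K) * cdMeasure G (H ⊓ K) := cdMeasure_mul_cdMeasure_le H K
      _ ≤ cdMeasure G H * cdMeasure G (H ⊓ K) := Nat.mul_le_mul_right _ (hH _)
  exact fun L => (hH L).trans (Nat.le_of_mul_le_mul_left h (cdMeasure_pos H))

theorem centralizer_mem_CD {H : Subgroup G} (hH : H ∈ CD G) : centralizer (H : Set G) ∈ CD G :=
  fun K => (hH K).trans <| by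
    rw [cdMeasure, cdMeasure, mul_comm]
    exact Nat.mul_le_mul_left _ (card_le_of_le (le_centralizer_iff.mp le_rfl))

theorem exists_least_mem_CD :
    ∃ A ∈ CD G, ∀ H ∈ CD G, A ≤ H ∧ H ≤ centralizer (A : Set G) := by
  obtain ⟨M, hM⟩ := Finite.exists_max (cdMeasure G)
  obtain ⟨A, hA, hmin⟩ :=
    Set.exists_min_image (CD G) (fun H => Nat.card H) (Set.toFinite _) ⟨M, hM⟩
  have hle : ∀ H ∈ CD G, A ≤ H := fun H hH =>
    eq_of_le_of_card_ge inf_le_left (hmin _ (inf_mem_CD hA hH)) ▸ inf_le_right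
  exact ⟨A, hA, fun H hH =>
    ⟨hle H hH, le_centralizer_iff.mp (hle _ (centralizer_mem_CD hH))⟩⟩

end ChermakDelgado

section PGroup

open Subgroup

variable {G : Type*} [Group G] {p n : ℕ} [hp : Fact p.Prime]

theorem cdMeasure_eq_pow (hG : Nat.card G = p ^ n) (H : Subgroup G) :
    cdMeasure G H = p ^ (H.logCard p + (centralizer (H : Set G)).logCard p) := by
  rw [cdMeasure, card_eq_pow_logCard hG, card_eq_pow_logCard hG, pow_add]

theorem normal_of_logCard_add_one (hG : Nat.card G = p ^ n) {T : Subgroup G}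
    (hT : T.logCard p + 1 = n) : T.Normal := by
  refine normal_of_index_eq_minFac_card ?_
  rw [hG, Nat.Prime.pow_minFac hp.out (by omega)]
  simpa using (index_eq_pow_iff hG (k := 1)).mpr hT

theorem sdiff_eq_biUnion_Ioo {Z T : Subgroup G} (hZT : Z ≤ T)
    (hT : ∀ x ∈ T, Z ⊔ zpowers x ≠ T) :
    (T : Set G) \ Z = ⋃ H ∈ Set.Ioo Z T, (H : Set G) \ Z := by
  ext x
  simp only [Set.mem_sdiff, Set.mem_iUnion, SetLike.mem_coe, exists_prop]
  refine ⟨fun ⟨hxT, hxZ⟩ => ⟨Z ⊔ zpowers x, ⟨?_, ?_⟩, mem_sup_right (mem_zpowers x), hxZ⟩,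
    fun ⟨H, hH, hxH, hxZ⟩ => ⟨hH.2.le hxH, hxZ⟩⟩
  · exact lt_of_le_of_ne le_sup_left fun he => hxZ (he ▸ mem_sup_right (mem_zpowers x))
  · exact lt_of_le_of_ne (sup_le hZT (zpowers_le.mpr hxT)) (hT x hxT)

variable [Finite G]

theorem logCard_commutator_add_two_le (hG : Nat.card G = p ^ n) (h : commutator G ≠ ⊥) :
    (commutator G).logCard p + 2 ≤ n := by
  have := (IsPGroup.of_card hG).isNilpotent
  have hlt : commutator G < ⊤ :=
    lowerCentralSeries_succ_lt (j := 0) (ne_bot_of_le_ne_bot h le_top)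
  have hlog := logCard_top hG ▸ logCard_lt_logCard hG hlt
  by_contra hcon
  have : IsCyclic (G ⧸ commutator G) := isCyclic_of_prime_card (p := p) <| by
    rw [card_quotient_eq_pow hG, show n - (commutator G).logCard p = 1 by omega, pow_one]
  exact (lowerCentralSeries_succ_lt (j := 1) h).not_ge commutator_le_lowerCentralSeries_two

theorem add_two_le_of_lowerCentralSeries_ne_bot (hG : Nat.card G = p ^ n) {k : ℕ} (hk1 : 1 ≤ k)
    (hk : (⊤ : Subgroup G).lowerCentralSeries k ≠ ⊥) : k + 2 ≤ n := by
  have h1 := add_one_le_logCard_lowerCentralSeries hG hk hk1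
  rw [top_lowerCentralSeries_one] at h1
  have h2 := logCard_commutator_add_two_le hG
    (ne_bot_of_le_ne_bot hk (Subgroup.lowerCentralSeries_antitone _ hk1))
  omega

theorem logCard_center_add_le (hG : Nat.card G = p ^ n) {k : ℕ} (hk1 : 1 ≤ k)
    (hk : (⊤ : Subgroup G).lowerCentralSeries (k + 1) ≠ ⊥) :
    (center G).logCard p + k + 2 ≤ n := by
  have hQ := add_two_le_of_lowerCentralSeries_ne_bot (card_quotient_eq_pow hG (center G)) hk1 ?_
  · have := logCard_le hG (center G)
    omega
  intro hbot
  refine hk (Subgroup.lowerCentralSeries_succ_eq_bot _ ?_)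
  have hmap := map_lowerCentralSeries ⊤ (QuotientGroup.mk' (center G)) k
  rw [map_top_of_surjective _ (QuotientGroup.mk'_surjective _), hbot, Subgroup.map_eq_bot_iff,
    QuotientGroup.ker_mk'] at hmap
  exact hmap

theorem commutator_le_of_normal (hG : Nat.card G = p ^ n) {H : Subgroup G} [H.Normal]
    (hH : n ≤ H.logCard p + 2) : commutator G ≤ H := by
  apply Normal.quotient_commutative_iff_commutator_le.mp
  have hQ := card_quotient_eq_pow hG H
  obtain h0 | h1 | h2 : n - H.logCard p = 0 ∨ n - H.logCard p = 1 ∨ n - H.logCard p = 2 := by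
    omega
  · rw [h0, pow_zero, Nat.card_eq_one_iff_unique] at hQ
    exact ⟨⟨fun _ _ => hQ.1.elim _ _⟩⟩
  · rw [h1, pow_one] at hQ
    have := isCyclic_of_prime_card hQ
    infer_instance
  · rw [h2] at hQ
    exact IsPGroup.isMulCommutative_of_card_eq_prime_sq hQ

theorem logCard_of_mem_Ioo (hG : Nat.card G = p ^ n) {Z T H : Subgroup G}
    (hH : H ∈ Set.Ioo Z T) (hlog : T.logCard p = Z.logCard p + 2) :
    H.logCard p = Z.logCard p + 1 := by
  have := logCard_lt_logCard hG hH.1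
  have := logCard_lt_logCard hG hH.2
  omega

theorem sup_zpowers_eq_of_mem_Ioo (hG : Nat.card G = p ^ n) {Z T H : Subgroup G}
    (hH : H ∈ Set.Ioo Z T) (hlog : T.logCard p = Z.logCard p + 2) {x : G} (hxH : x ∈ H)
    (hxZ : x ∉ Z) : Z ⊔ zpowers x = H := by
  have hlt : Z < Z ⊔ zpowers x :=
    lt_of_le_of_ne le_sup_left fun he => hxZ (he ▸ mem_sup_right (mem_zpowers x))
  have := logCard_lt_logCard hG hlt
  have := logCard_of_mem_Ioo hG hH hlog
  exact eq_of_le_of_logCard_le hG (sup_le hH.1.le (zpowers_le.mpr hxH)) (by omega)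

theorem pairwiseDisjoint_Ioo_sdiff (hG : Nat.card G = p ^ n) {Z T : Subgroup G}
    (hlog : T.logCard p = Z.logCard p + 2) :
    (Set.Ioo Z T).PairwiseDisjoint fun H : Subgroup G => (H : Set G) \ Z := by
  intro H hH K hK hne
  refine Set.disjoint_left.mpr fun x ⟨hxH, hxZ⟩ ⟨hxK, _⟩ => hne ?_
  rw [← sup_zpowers_eq_of_mem_Ioo hG hH hlog hxH hxZ,
    sup_zpowers_eq_of_mem_Ioo hG hK hlog hxK hxZ]

theorem ncard_sdiff_add_pow_logCard (hG : Nat.card G = p ^ n) {Z K : Subgroup G} (hZK : Z ≤ K) :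
    ((K : Set G) \ Z).ncard + p ^ Z.logCard p = p ^ K.logCard p := by
  rw [← card_eq_pow_logCard hG, ← card_eq_pow_logCard hG]
  exact Set.ncard_sdiff_add_ncard_of_subset hZK

/-- When `T / Z` has order `p²` and is not cyclic, it has `p + 1` subgroups of order `p`. -/
theorem ncard_Ioo_eq (hG : Nat.card G = p ^ n) {Z T : Subgroup G} (hZT : Z ≤ T)
    (hlog : T.logCard p = Z.logCard p + 2) (hT : ∀ x ∈ T, Z ⊔ zpowers x ≠ T) :
    (Set.Ioo Z T).ncard = p + 1 := by
  have hfibre : ∀ H ∈ Set.Ioo Z T,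
      ((H : Set G) \ Z).ncard = p ^ (Z.logCard p + 1) - p ^ Z.logCard p := fun H hH =>
    Nat.eq_sub_of_add_eq (logCard_of_mem_Ioo hG hH hlog ▸ ncard_sdiff_add_pow_logCard hG hH.1.le)
  have hsum := (Set.toFinite _).ncard_biUnion (fun _ _ => Set.toFinite _)
    (pairwiseDisjoint_Ioo_sdiff hG hlog)
  rw [← sdiff_eq_biUnion_Ioo hZT hT, finsum_mem_congr rfl hfibre,
    ← mul_one (p ^ (Z.logCard p + 1) - p ^ Z.logCard p), ← mul_finsum_mem, finsum_one] at hsum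
  have hT := ncard_sdiff_add_pow_logCard hG hZT
  rw [hsum, hlog] at hT
  generalize Z.logCard p = z at hT
  have hlt : p ^ z < p ^ (z + 1) := Nat.pow_lt_pow_right hp.out.one_lt (Nat.lt_succ_self z)
  refine Nat.eq_of_mul_eq_mul_left (Nat.sub_pos_of_lt hlt) ?_
  zify [hlt.le] at hT ⊢
  linear_combination hT

end PGroup

/-- Maximal class is encoded as `γ_{n-1}(G) ≠ 1`; Mathlib's `lowerCentralSeries k` is
`γ_{k+1}`. -/
structure MaximalClassSetting (p n : ℕ) (G : Type*) [Group G] : Prop where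
  card_eq : Nat.card G = p ^ n
  five_lt : 5 < n
  isMulCommutative_commutator : IsMulCommutative (commutator G)
  lowerCentralSeries_ne_bot : (⊤ : Subgroup G).lowerCentralSeries (n - 2) ≠ ⊥
  not_exists_isMulCommutative_index_eq : ¬ ∃ A : Subgroup G, IsMulCommutative A ∧ A.index = p

namespace MaximalClassSetting

open Subgroup

variable {p n : ℕ} {G : Type*} [Group G] [hp : Fact p.Prime]

theorem not_isMulCommutative_of_logCard_add_one (h : MaximalClassSetting p n G) {M : Subgroup G}
    (hM : M.logCard p + 1 = n) : ¬IsMulCommutative M := fun hM' =>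
  h.not_exists_isMulCommutative_index_eq
    ⟨M, hM', by simpa using (index_eq_pow_iff h.card_eq).mpr hM⟩

variable [Finite G]

theorem logCard_commutator (h : MaximalClassSetting p n G) :
    (commutator G).logCard p = n - 2 := by
  have := h.five_lt
  have h1 := add_one_le_logCard_lowerCentralSeries h.card_eq h.lowerCentralSeries_ne_bot
    (j := 1) (by omega)
  rw [top_lowerCentralSeries_one] at h1
  have h2 := logCard_commutator_add_two_le h.card_eq (ne_bot_of_le_ne_bot
    h.lowerCentralSeries_ne_bot
    (Subgroup.lowerCentralSeries_antitone _ (show 1 ≤ n - 2 by omega)))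
  omega

theorem logCard_le_one_of_centralizer_eq_top (h : MaximalClassSetting p n G) {H : Subgroup G}
    (hH : centralizer (H : Set G) = ⊤) : H.logCard p ≤ 1 := by
  have := h.five_lt
  have hZ := logCard_center_add_le h.card_eq (k := n - 3) (by omega)
    (by rw [show n - 3 + 1 = n - 2 by omega]; exact h.lowerCentralSeries_ne_bot)
  have := logCard_mono (p := p) (centralizer_eq_top_iff_subset.mp hH)
  omega

theorem centralizer_commutator (h : MaximalClassSetting p n G) :
    centralizer (commutator G : Set G) = commutator G := by
  have := h.five_lt
  have hle : commutator G ≤ centralizer (commutator G : Set G) :=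
    le_centralizer_iff_isMulCommutative.mpr h.isMulCommutative_commutator
  have hG' := h.logCard_commutator
  have hne : centralizer (commutator G : Set G) ≠ ⊤ := fun htop => by
    have := h.logCard_le_one_of_centralizer_eq_top htop
    omega
  have hlt := logCard_top h.card_eq ▸ logCard_lt_logCard h.card_eq (lt_top_iff_ne_top.mpr hne)
  refine (eq_of_le_of_logCard_le h.card_eq hle ?_).symm
  by_contra hcon
  exact h.not_isMulCommutative_of_logCard_add_one (by omega)
    (isMulCommutative_of_le_centralizer h.card_eq hle le_rfl (by omega))

theorem logCard_add_logCard_centralizer_le (h : MaximalClassSetting p n G) {A : Subgroup G}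
    (hA : IsMulCommutative A) :
    A.logCard p + (centralizer (A : Set G)).logCard p ≤ 2 * n - 4 := by
  have := h.five_lt
  have hAM : A ≤ centralizer (A : Set G) := le_centralizer_iff_isMulCommutative.mpr hA
  have := logCard_mono (p := p) hAM
  by_cases htop : centralizer (A : Set G) = ⊤
  · have := h.logCard_le_one_of_centralizer_eq_top htop
    have := logCard_le h.card_eq (centralizer (A : Set G))
    omega
  have hlt := logCard_top h.card_eq ▸ logCard_lt_logCard h.card_eq (lt_top_iff_ne_top.mpr htop)
  by_contra hcon
  exact h.not_isMulCommutative_of_logCard_add_one (by omega)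
    (isMulCommutative_of_le_centralizer h.card_eq hAM le_rfl (by omega))

theorem mem_CD_iff (h : MaximalClassSetting p n G) {H : Subgroup G} :
    H ∈ CD G ↔ H.logCard p + (centralizer (H : Set G)).logCard p = 2 * n - 4 := by
  obtain ⟨A, hA, hleast⟩ := exists_least_mem_CD (G := G)
  have hbound := h.logCard_add_logCard_centralizer_le
    (le_centralizer_iff_isMulCommutative.mp (hleast A hA).2)
  have hG' : (commutator G).logCard p + (centralizer (commutator G : Set G)).logCard p =
      2 * n - 4 := by
    have := h.five_lt
    rw [h.centralizer_commutator, h.logCard_commutator]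
    omega
  simp only [CD, Set.mem_ofPred, cdMeasure_eq_pow h.card_eq,
    Nat.pow_le_pow_iff_right hp.out.one_lt] at hA hG' ⊢
  constructor
  · intro hH
    have := hH (commutator G)
    have := hA H
    omega
  · intro hH K
    have := hA K
    omega

theorem logCard_centralizer_lt_of_mem_CD (h : MaximalClassSetting p n G) {H : Subgroup G}
    (hH : H ∈ CD G) : (centralizer (H : Set G)).logCard p < n := by
  have := h.five_lt
  have hsum := h.mem_CD_iff.mp hH
  refine lt_of_le_of_ne (logCard_le h.card_eq _) fun hn => ?_
  have := h.logCard_le_one_of_centralizer_eq_top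
    (eq_of_le_of_logCard_le h.card_eq le_top (logCard_top h.card_eq ▸ hn.ge))
  omega

theorem CD_eq_singleton_commutator (h : MaximalClassSetting p n G)
    (hT : ¬∃ T : Subgroup G, T.index = p ∧ (center T).index = p ^ 2) :
    CD G = {commutator G} := by
  obtain ⟨A, hA, hleast⟩ := exists_least_mem_CD (G := G)
  set M := centralizer (A : Set G)
  have hAM : A ≤ M := (hleast A hA).2
  have hsum : A.logCard p + M.logCard p = 2 * n - 4 := h.mem_CD_iff.mp hA
  have hMn : M.logCard p < n := h.logCard_centralizer_lt_of_mem_CD hA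
  have := logCard_mono (p := p) hAM
  have hAeq : A = M := by
    refine eq_of_le_of_logCard_le h.card_eq hAM (not_lt.mp fun hlt => hT ⟨M, ?_, ?_⟩)
    · simpa using (index_eq_pow_iff h.card_eq).mpr (show M.logCard p + 1 = n by omega)
    have hAZ : A ≤ centerIn M :=
      (centerIn_eq M).symm ▸ le_inf (le_centralizer_iff.mp le_rfl) hAM
    have := logCard_mono (p := p) hAZ
    have := logCard_centerIn_add_two_le h.card_eq
      (h.not_isMulCommutative_of_logCard_add_one (M := M) (by omega))
    exact (index_center_eq_pow_iff h.card_eq).mpr (by omega)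
  have hG' : commutator G ∈ CD G := by
    have := h.five_lt
    rw [h.mem_CD_iff, h.centralizer_commutator, h.logCard_commutator]
    omega
  have hmem : ∀ H ∈ CD G, H = A := fun H hH =>
    le_antisymm (hAeq ▸ (hleast H hH).2) (hleast H hH).1
  ext H
  exact ⟨fun hH => (hmem H hH).trans (hmem _ hG').symm, fun hH => hH ▸ hG'⟩

section MaximalSubgroup

variable {T : Subgroup G}

theorem logCard_eq_of_mem_Ioo (h : MaximalClassSetting p n G) (hT : T.logCard p + 1 = n)
    (hZ : (centerIn T).logCard p + 2 = T.logCard p) {H : Subgroup G}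
    (hH : H ∈ Set.Ioo (centerIn T) T) : H.logCard p = n - 2 := by
  have := logCard_of_mem_Ioo h.card_eq hH hZ.symm
  omega

theorem centralizer_centerIn (h : MaximalClassSetting p n G) (hT : T.logCard p + 1 = n)
    (hZ : (centerIn T).logCard p + 2 = T.logCard p) :
    centralizer (centerIn T : Set G) = T := by
  have := h.five_lt
  have hTC : T ≤ centralizer (centerIn T : Set G) :=
    le_centralizer_iff.mp ((centerIn_eq T).trans_le inf_le_left)
  have hne : centralizer (centerIn T : Set G) ≠ ⊤ := fun htop => by
    have := h.logCard_le_one_of_centralizer_eq_top htop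
    omega
  have hlt := logCard_top h.card_eq ▸ logCard_lt_logCard h.card_eq (lt_top_iff_ne_top.mpr hne)
  exact (eq_of_le_of_logCard_le h.card_eq hTC (by omega)).symm

theorem centralizer_eq_centerIn (h : MaximalClassSetting p n G) (hT : T.logCard p + 1 = n)
    (hZ : (centerIn T).logCard p + 2 = T.logCard p) :
    centralizer (T : Set G) = centerIn T := by
  have hle : centralizer (T : Set G) ≤ T :=
    (centralizer_le (SetLike.coe_subset_coe.mpr ((centerIn_eq T).trans_le inf_le_right))).trans
      (h.centralizer_centerIn hT hZ).le
  rw [centerIn_eq]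
  exact le_antisymm (le_inf le_rfl hle) inf_le_left

theorem centralizer_eq_self_of_mem_Ioo (h : MaximalClassSetting p n G)
    (hT : T.logCard p + 1 = n) (hZ : (centerIn T).logCard p + 2 = T.logCard p) {H : Subgroup G}
    (hH : H ∈ Set.Ioo (centerIn T) T) : centralizer (H : Set G) = H := by
  have hCZ := h.centralizer_centerIn hT hZ
  have hlog := h.logCard_eq_of_mem_Ioo hT hZ hH
  have hHC : H ≤ centralizer (H : Set G) := le_centralizer_iff_isMulCommutative.mpr
    (isMulCommutative_of_le_centralizer h.card_eq hH.1.le (hH.2.le.trans hCZ.ge) (by omega))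
  have hCT : centralizer (H : Set G) ≤ T :=
    (centralizer_le (SetLike.coe_subset_coe.mpr hH.1.le)).trans hCZ.le
  have hne : centralizer (H : Set G) ≠ T := fun he =>
    hH.1.not_ge (h.centralizer_eq_centerIn hT hZ ▸ le_centralizer_iff.mp he.ge)
  have := logCard_lt_logCard h.card_eq (lt_of_le_of_ne hCT hne)
  exact (eq_of_le_of_logCard_le h.card_eq hHC (by omega)).symm

theorem CD_eq_Icc (h : MaximalClassSetting p n G) (hT : T.logCard p + 1 = n)
    (hZ : (centerIn T).logCard p + 2 = T.logCard p) : CD G = Set.Icc (centerIn T) T := by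
  have := h.five_lt
  have hZCD : centerIn T ∈ CD G :=
    h.mem_CD_iff.mpr (by rw [h.centralizer_centerIn hT hZ]; omega)
  have hTCD : T ∈ CD G := h.mem_CD_iff.mpr (by rw [h.centralizer_eq_centerIn hT hZ]; omega)
  obtain ⟨A, hA, hleast⟩ := exists_least_mem_CD (G := G)
  have hTM : T = centralizer (A : Set G) := eq_of_le_of_logCard_le h.card_eq (hleast T hTCD).2
    (by have := h.logCard_centralizer_lt_of_mem_CD hA; omega)
  have hAZ : A = centerIn T := eq_of_le_of_logCard_le h.card_eq (hleast _ hZCD).1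
    (by have := h.mem_CD_iff.mp hA; rw [← hTM] at this; omega)
  ext H
  refine ⟨fun hH => hAZ ▸ hTM ▸ hleast H hH, fun ⟨hZH, hHT⟩ => ?_⟩
  rcases hZH.eq_or_lt with rfl | hZH
  · exact hZCD
  rcases hHT.eq_or_lt with rfl | hHT
  · exact hTCD
  have := h.logCard_eq_of_mem_Ioo hT hZ ⟨hZH, hHT⟩
  exact h.mem_CD_iff.mpr (by rw [h.centralizer_eq_self_of_mem_Ioo hT hZ ⟨hZH, hHT⟩]; omega)

theorem commutator_mem_Ioo (h : MaximalClassSetting p n G) (hT : T.logCard p + 1 = n)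
    (hZ : (centerIn T).logCard p + 2 = T.logCard p) :
    commutator G ∈ Set.Ioo (centerIn T) T := by
  have := h.five_lt
  have hG' := h.logCard_commutator
  have : T.Normal := normal_of_logCard_add_one h.card_eq hT
  have hG'T : commutator G ≤ T := commutator_le_of_normal h.card_eq (by omega)
  have hZG' : centerIn T ≤ commutator G :=
    calc centerIn T = centralizer (T : Set G) := (h.centralizer_eq_centerIn hT hZ).symm
      _ ≤ centralizer (commutator G : Set G) :=
        centralizer_le (SetLike.coe_subset_coe.mpr hG'T)
      _ = commutator G := h.centralizer_commutator
  exact ⟨lt_of_le_of_logCard_lt (p := p) hZG' (by omega),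
    lt_of_le_of_logCard_lt (p := p) hG'T (by omega)⟩

theorem not_normal_of_mem_Ioo (h : MaximalClassSetting p n G) (hT : T.logCard p + 1 = n)
    (hZ : (centerIn T).logCard p + 2 = T.logCard p) {H : Subgroup G}
    (hH : H ∈ Set.Ioo (centerIn T) T) (hne : H ≠ commutator G) : ¬H.Normal := fun _ => by
  have := h.logCard_eq_of_mem_Ioo hT hZ hH
  have := h.logCard_commutator
  exact hne (eq_of_le_of_logCard_le h.card_eq (commutator_le_of_normal h.card_eq (by omega))
    (by omega)).symm

theorem ncard_Ioo_centerIn (h : MaximalClassSetting p n G) (hT : T.logCard p + 1 = n)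
    (hZ : (centerIn T).logCard p + 2 = T.logCard p) :
    (Set.Ioo (centerIn T) T).ncard = p + 1 := by
  have hTC := (h.centralizer_centerIn hT hZ).ge
  have hZT : centerIn T ≤ T := (centerIn_eq T).trans_le inf_le_right
  have : IsMulCommutative (centerIn T) := le_centralizer_iff_isMulCommutative.mp (hZT.trans hTC)
  refine ncard_Ioo_eq h.card_eq hZT hZ.symm fun x hx he =>
    h.not_isMulCommutative_of_logCard_add_one hT ?_
  rw [← he]
  exact isMulCommutative_sup (le_centralizer_iff.mp ((zpowers_le.mpr hx).trans hTC))

end MaximalSubgroup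

end MaximalClassSetting

theorem stmt_19_general (p n : ℕ) (hp : p.Prime) (G : Type*) [Group G] [Finite G]
    (hcard : Nat.card G = p ^ n) (hn : 5 < n)
    (hmeta : IsMulCommutative (commutator G))
    (hmax₂ : ∀ k < n - 1, (⊤ : Subgroup G).lowerCentralSeries k ≠ ⊥)
    (hnoA : ¬ ∃ A : Subgroup G, IsMulCommutative A ∧ A.index = p) :
    (∀ T : Subgroup G, T.index = p → (Subgroup.center T).index = p ^ 2 →
      CD G = {H : Subgroup G | centerIn T ≤ H ∧ H ≤ T} ∧
      {H : Subgroup G | centerIn T < H ∧ H < T}.ncard = p + 1 ∧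
      (∀ H : Subgroup G, centerIn T < H → H < T →
        IsMulCommutative H ∧ Nat.card H = p ^ (n - 2)) ∧
      (centerIn T < commutator G ∧ commutator G < T) ∧
      (∀ H : Subgroup G, centerIn T < H → H < T → H ≠ commutator G →
        ¬ H.Normal)) ∧
    ((¬ ∃ T : Subgroup G, T.index = p ∧ (Subgroup.center T).index = p ^ 2) →
      CD G = {commutator G}) := by
  have := Fact.mk hp
  have h : MaximalClassSetting p n G := ⟨hcard, hn, hmeta, hmax₂ (n - 2) (by omega), hnoA⟩
  refine ⟨fun T hTp hTZ => ?_, h.CD_eq_singleton_commutator⟩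
  have hT := (Subgroup.index_eq_pow_iff hcard).mp (hTp.trans (pow_one p).symm)
  have hZ := (Subgroup.index_center_eq_pow_iff hcard).mp hTZ
  refine ⟨h.CD_eq_Icc hT hZ, h.ncard_Ioo_centerIn hT hZ, fun H h₁ h₂ => ⟨?_, ?_⟩,
    h.commutator_mem_Ioo hT hZ, fun H h₁ h₂ => h.not_normal_of_mem_Ioo hT hZ ⟨h₁, h₂⟩⟩
  · exact Subgroup.le_centralizer_iff_isMulCommutative.mp
      (h.centralizer_eq_self_of_mem_Ioo hT hZ ⟨h₁, h₂⟩).ge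
  · rw [Subgroup.card_eq_pow_logCard hcard, h.logCard_eq_of_mem_Ioo hT hZ ⟨h₁, h₂⟩]

theorem stmt_19 (p n : ℕ) (hp : p.Prime) (G : Type*) [Group G] [Finite G]
    (hcard : Nat.card G = p ^ n) (hn : 5 < n)
    (hmeta : IsMulCommutative (commutator G))
    (hmax₁ : (⊤ : Subgroup G).lowerCentralSeries (n - 1) = ⊥)
    (hmax₂ : ∀ k < n - 1, (⊤ : Subgroup G).lowerCentralSeries k ≠ ⊥)
    (hnoA : ¬ ∃ A : Subgroup G, IsMulCommutative A ∧ A.index = p) :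
    (∀ T : Subgroup G, T.index = p → (Subgroup.center T).index = p ^ 2 →
      CD G = {H : Subgroup G | centerIn T ≤ H ∧ H ≤ T} ∧
      {H : Subgroup G | centerIn T < H ∧ H < T}.ncard = p + 1 ∧
      (∀ H : Subgroup G, centerIn T < H → H < T →
        IsMulCommutative H ∧ Nat.card H = p ^ (n - 2)) ∧
      (centerIn T < commutator G ∧ commutator G < T) ∧
      (∀ H : Subgroup G, centerIn T < H → H < T → H ≠ commutator G →
        ¬ H.Normal)) ∧
    ((¬ ∃ T : Subgroup G, T.index = p ∧ (Subgroup.center T).index = p ^ 2) →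
      CD G = {commutator G}) :=
  stmt_19_general p n hp G hcard hn hmeta hmax₂ hnoA
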